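/- arXiv:1210.1193 — 4 statements merged into one kernel-verified Lean document; each statement's English description precedes it below -/
import Mathlib

section
/- Consider a run of the deterministic tree-gossip algorithm (Algorithm 4). No node is active at time L: for every node v and every G-neighbor w of v, we have w ∈ R L v. Hence Algorithm 4 performs at most ⌈log₂ n⌉ iterations and solves the 1-local broadcast problem. -/
/-!
An active node `v` at time `t` contacts a neighbour `u t v` that is itself active (by symmetry
of knowledge it is missing `v`), and the two were both active at time `t - 1` without knowing each
other, so their contact trees at time `t` are disjoint. Merging them doubles the size, hence an
active node at time `t` has a contact tree of at least `2 ^ (t + 1)` nodes. Once `n ≤ 2 ^ t` this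
is impossible, so nobody is active at time `⌈log₂ n⌉`.
-/

open Finset

section

variable {V : Type*}

def IsActive (G : SimpleGraph V) (R : ℕ → V → Finset V) (t : ℕ) (v : V) : Prop :=
  ∃ w, G.Adj v w ∧ w ∉ R t v

structure TreeGossipRun [DecidableEq V] (G : SimpleGraph V) (R : ℕ → V → Finset V)
    (u : ℕ → V → V) (τ : ℕ → V → Finset V) : Prop where
  knowledge_zero : ∀ v, R 0 v = {v}
  knowledge_mono : ∀ t v, R t v ⊆ R (t + 1) v
  contact : ∀ t v, IsActive G R t v → G.Adj v (u t v) ∧ u t v ∉ R t v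
  tree_zero : ∀ v, τ 0 v = {v}
  tree_succ_of_active : ∀ t v, IsActive G R t v → τ (t + 1) v = τ t v ∪ τ t (u t v)
  knowledge_symm : ∀ t v w, w ∈ R t v ↔ v ∈ R t w
  mem_of_trees_meet : ∀ t v w, IsActive G R t v → IsActive G R t w →
    (τ (t + 1) v ∩ τ (t + 1) w).Nonempty → w ∈ R (t + 1) v

namespace TreeGossipRun

variable [DecidableEq V] {G : SimpleGraph V} {R : ℕ → V → Finset V} {u : ℕ → V → V}
  {τ : ℕ → V → Finset V}

theorem mem_knowledge_self (run : TreeGossipRun G R u τ) (t : ℕ) (v : V) : v ∈ R t v := by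
  induction t with
  | zero => simp [run.knowledge_zero]
  | succ t ih => exact run.knowledge_mono t v ih

theorem isActive_of_isActive_succ (run : TreeGossipRun G R u τ) {t : ℕ} {v : V}
    (hv : IsActive G R (t + 1) v) : IsActive G R t v :=
  let ⟨w, hadj, hw⟩ := hv
  ⟨w, hadj, fun h => hw (run.knowledge_mono t v h)⟩

theorem isActive_contact (run : TreeGossipRun G R u τ) {t : ℕ} {v : V}
    (hv : IsActive G R t v) : IsActive G R t (u t v) :=
  let ⟨hadj, hnot⟩ := run.contact t v hv
  ⟨v, hadj.symm, fun h => hnot ((run.knowledge_symm t v (u t v)).mpr h)⟩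

theorem two_pow_succ_le_card_tree (run : TreeGossipRun G R u τ) (t : ℕ) {v : V}
    (hv : IsActive G R t v) : 2 ^ (t + 1) ≤ #(τ (t + 1) v) := by
  induction t generalizing v with
  | zero =>
    have hne : v ≠ u 0 v := fun h => (run.contact 0 v hv).2 (h ▸ run.mem_knowledge_self 0 v)
    rw [run.tree_succ_of_active 0 v hv, run.tree_zero, run.tree_zero,
      card_union_of_disjoint (disjoint_singleton.mpr hne)]
    simp
  | succ t ih =>
    set w := u (t + 1) v
    have hv' : IsActive G R t v := run.isActive_of_isActive_succ hv
    have hw' : IsActive G R t w := run.isActive_of_isActive_succ (run.isActive_contact hv)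
    have hdisj : Disjoint (τ (t + 1) v) (τ (t + 1) w) := by
      rw [disjoint_iff_inter_eq_empty, ← not_nonempty_iff_eq_empty]
      exact fun hmeet => (run.contact (t + 1) v hv).2 (run.mem_of_trees_meet t v w hv' hw' hmeet)
    rw [run.tree_succ_of_active (t + 1) v hv, card_union_of_disjoint hdisj, pow_succ, mul_two]
    exact add_le_add (ih hv') (ih hw')

theorem not_isActive_of_card_le_two_pow [Fintype V] (run : TreeGossipRun G R u τ) {t : ℕ}
    (ht : Fintype.card V ≤ 2 ^ t) (v : V) : ¬ IsActive G R t v := fun hv => by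
  have hcard : 2 ^ (t + 1) ≤ Fintype.card V :=
    (run.two_pow_succ_le_card_tree t hv).trans (card_le_univ _)
  rw [pow_succ] at hcard
  linarith [Nat.one_le_two_pow (n := t)]

end TreeGossipRun

end

theorem algorithm4_solves_one_local_broadcast_general
    {V : Type*} [Fintype V] [DecidableEq V]
    (G : SimpleGraph V)
    (L : ℕ) (hL : L = Nat.clog 2 (Fintype.card V))
    (R : ℕ → V → Finset V) (u : ℕ → V → V) (τ : ℕ → V → Finset V)
    -- (1) initial knowledge and monotonicity
    (hR0 : ∀ v : V, R 0 v = {v})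
    (hRmono : ∀ (t : ℕ) (v : V), R t v ⊆ R (t + 1) v)
    -- (2) every active node contacts a neighbor whose rumor it is missing
    (hu : ∀ (t : ℕ) (v : V), (∃ w, G.Adj v w ∧ w ∉ R t v) →
        G.Adj v (u t v) ∧ u t v ∉ R t v)
    -- (3) contact trees
    (hτ0 : ∀ v : V, τ 0 v = {v})
    (hτact : ∀ (t : ℕ) (v : V), (∃ w, G.Adj v w ∧ w ∉ R t v) →
        τ (t + 1) v = τ t v ∪ τ t (u t v))
    -- (4) symmetry of knowledge
    (hsym : ∀ (t : ℕ) (v w : V), w ∈ R t v ↔ v ∈ R t w)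
    -- (5) active nodes with intersecting contact trees learn about each other
    (hmeet : ∀ (t : ℕ) (v w : V), (∃ x, G.Adj v x ∧ x ∉ R t v) →
        (∃ x, G.Adj w x ∧ x ∉ R t w) →
        (τ (t + 1) v ∩ τ (t + 1) w).Nonempty → w ∈ R (t + 1) v) :
    ∀ v w : V, G.Adj v w → w ∈ R L v := by
  have run : TreeGossipRun G R u τ := ⟨hR0, hRmono, hu, hτ0, hτact, hsym, hmeet⟩
  intro v w hadj
  by_contra hw
  exact run.not_isActive_of_card_le_two_pow (hL ▸ Nat.le_pow_clog one_lt_two _) v ⟨w, hadj, hw⟩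

/-- A run of the deterministic tree-gossip algorithm
(Algorithm 4) has no active node at time `L = ⌈log₂ n⌉`: every node knows the
rumors of all of its `G`-neighbors after `L` iterations, i.e. Algorithm 4
performs at most `⌈log₂ n⌉` iterations and solves the 1-local broadcast
problem. -/
theorem algorithm4_solves_one_local_broadcast
    {V : Type*} [Fintype V] [DecidableEq V]
    (G : SimpleGraph V)
    (hn : 2 ≤ Fintype.card V)
    (L : ℕ) (hL : L = Nat.clog 2 (Fintype.card V))
    (R : ℕ → V → Finset V) (u : ℕ → V → V) (τ : ℕ → V → Finset V)
    -- (1) initial knowledge and monotonicity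
    (hR0 : ∀ v : V, R 0 v = {v})
    (hRmono : ∀ (t : ℕ) (v : V), R t v ⊆ R (t + 1) v)
    -- (2) every active node contacts a neighbor whose rumor it is missing
    (hu : ∀ (t : ℕ) (v : V), (∃ w, G.Adj v w ∧ w ∉ R t v) →
        G.Adj v (u t v) ∧ u t v ∉ R t v)
    -- (3) contact trees
    (hτ0 : ∀ v : V, τ 0 v = {v})
    (hτact : ∀ (t : ℕ) (v : V), (∃ w, G.Adj v w ∧ w ∉ R t v) →
        τ (t + 1) v = τ t v ∪ τ t (u t v))
    (hτinact : ∀ (t : ℕ) (v : V), ¬ (∃ w, G.Adj v w ∧ w ∉ R t v) →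
        τ (t + 1) v = τ t v)
    -- (4) symmetry of knowledge
    (hsym : ∀ (t : ℕ) (v w : V), w ∈ R t v ↔ v ∈ R t w)
    -- (5) active nodes with intersecting contact trees learn about each other
    (hmeet : ∀ (t : ℕ) (v w : V), (∃ x, G.Adj v x ∧ x ∉ R t v) →
        (∃ x, G.Adj w x ∧ x ∉ R t w) →
        (τ (t + 1) v ∩ τ (t + 1) w).Nonempty → w ∈ R (t + 1) v) :
    ∀ v w : V, G.Adj v w → w ∈ R L v :=
  algorithm4_solves_one_local_broadcast_general G L hL R u τ hR0 hRmono hu hτ0 hτact hsym hmeet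
end

section
/- Consider a run of the deterministic tree-gossip algorithm (Algorithm 4). For every time t, if a node v is active at time t then its contact tree satisfies |τ t v| ≥ 2^t; moreover, for every w ∈ Γ_G(v) \ R t v (a G-neighbor of v not in R t v) the contact trees are disjoint: τ t v ∩ τ t w = ∅, and also |τ t w| ≥ 2^t. -/
/-- In a run of the deterministic tree-gossip algorithm
(Algorithm 4), if a node `v` is active at time `t` then `|τ t v| ≥ 2^t`, and
for every `G`-neighbor `w` of `v` with `w ∉ R t v` the contact trees `τ t v`
and `τ t w` are disjoint and `|τ t w| ≥ 2^t` as well. -/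
theorem algorithm4_contact_trees_large_and_disjoint
    {V : Type*} [Fintype V] [DecidableEq V]
    (G : SimpleGraph V)
    (hn : 2 ≤ Fintype.card V)
    (L : ℕ) (hL : L = Nat.clog 2 (Fintype.card V))
    (R : ℕ → V → Finset V) (u : ℕ → V → V) (τ : ℕ → V → Finset V)
    (hR0 : ∀ v : V, R 0 v = {v})
    (hRmono : ∀ (t : ℕ) (v : V), R t v ⊆ R (t + 1) v)
    (hu : ∀ (t : ℕ) (v : V), (∃ w, G.Adj v w ∧ w ∉ R t v) →
        G.Adj v (u t v) ∧ u t v ∉ R t v)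
    (hτ0 : ∀ v : V, τ 0 v = {v})
    (hτact : ∀ (t : ℕ) (v : V), (∃ w, G.Adj v w ∧ w ∉ R t v) →
        τ (t + 1) v = τ t v ∪ τ t (u t v))
    (hτinact : ∀ (t : ℕ) (v : V), ¬ (∃ w, G.Adj v w ∧ w ∉ R t v) →
        τ (t + 1) v = τ t v)
    (hsym : ∀ (t : ℕ) (v w : V), w ∈ R t v ↔ v ∈ R t w)
    (hmeet : ∀ (t : ℕ) (v w : V), (∃ x, G.Adj v x ∧ x ∉ R t v) →
        (∃ x, G.Adj w x ∧ x ∉ R t w) →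
        (τ (t + 1) v ∩ τ (t + 1) w).Nonempty → w ∈ R (t + 1) v) :
    ∀ (t : ℕ) (v : V), (∃ w, G.Adj v w ∧ w ∉ R t v) →
      2 ^ t ≤ (τ t v).card ∧
      ∀ w : V, G.Adj v w → w ∉ R t v →
        τ t v ∩ τ t w = ∅ ∧ 2 ^ t ≤ (τ t w).card := by
  intro t
  induction t with
  | zero =>
    intro v _
    refine ⟨by simp [hτ0], ?_⟩
    intro w hadj hw
    rw [hR0] at hw
    simp only [Finset.mem_singleton] at hw
    refine ⟨?_, by simp [hτ0]⟩
    rw [hτ0, hτ0]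
    ext x
    simp only [Finset.mem_inter, Finset.mem_singleton, Finset.notMem_empty, iff_false]
    rintro ⟨rfl, rfl⟩
    exact hw rfl
  | succ t ih =>
    have key : ∀ x : V, (∃ y, G.Adj x y ∧ y ∉ R t x) →
        2 ^ (t + 1) ≤ (τ (t + 1) x).card := by
      intro x hx
      obtain ⟨hadjx, hnotRx⟩ := hu t x hx
      obtain ⟨hc1, hd⟩ := ih x hx
      obtain ⟨hi, hc2⟩ := hd (u t x) hadjx hnotRx
      rw [hτact t x hx,
        Finset.card_union_of_disjoint (Finset.disjoint_iff_inter_eq_empty.mpr hi),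
        pow_succ]
      omega
    intro v hv1
    obtain ⟨w0, hadj0, hw0⟩ := hv1
    have hvact : ∃ x, G.Adj v x ∧ x ∉ R t v :=
      ⟨w0, hadj0, fun h => hw0 (hRmono t v h)⟩
    refine ⟨key v hvact, ?_⟩
    intro w hadj hw
    have hwt : w ∉ R t v := fun h => hw (hRmono t v h)
    have hwact : ∃ x, G.Adj w x ∧ x ∉ R t w :=
      ⟨v, hadj.symm, fun h => hwt ((hsym t v w).mpr h)⟩
    refine ⟨?_, key w hwact⟩
    rcases Finset.eq_empty_or_nonempty (τ (t + 1) v ∩ τ (t + 1) w) with he | hne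
    · exact he
    · exact absurd (hmeet t v w hvact hwact hne) hw
end

section
/- Let G' be a simple graph on a vertex type V, let S be a type of rumors, and let R₀ : V → Set S assign initial rumor sets. Define R : ℕ → V → Set S by R 0 = R₀ and R (i+1) v = ⋃ { R i u : u is in the closed neighborhood of v in G' }, where the closed neighborhood of v consists of v itself and all G'-neighbors of v. Then for every d and every v: R d v = ⋃ { R₀ u : there is a walk in G' from v to u of length at most d }. (Correctness of d iterations of flooding: after flooding for d hops, each node knows exactly the rumors initially held in its d-neighborhood.) -/
/-- Correctness of `d` iterations of flooding: if in each
iteration every node's rumor set becomes the union of the rumor sets of its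
closed neighborhood in `G'`, then after `d` iterations each node knows exactly
the rumors initially held by the nodes within `d` hops of it in `G'`. -/
theorem flooding_correct
    {V S : Type*} (G' : SimpleGraph V) (R₀ : V → Set S)
    (R : ℕ → V → Set S)
    (hR0 : R 0 = R₀)
    (hRstep : ∀ (i : ℕ) (v : V),
        R (i + 1) v = ⋃ u ∈ {u : V | u = v ∨ G'.Adj v u}, R i u) :
    ∀ (d : ℕ) (v : V),
      R d v = ⋃ u ∈ {u : V | ∃ p : G'.Walk v u, p.length ≤ d}, R₀ u := by
  intro d
  induction d with
  | zero =>
    intro v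
    rw [hR0]
    ext s
    simp only [Set.mem_iUnion, Set.mem_setOf_eq]
    constructor
    · intro hs
      exact ⟨v, ⟨SimpleGraph.Walk.nil, le_refl 0⟩, hs⟩
    · rintro ⟨u, ⟨p, hp⟩, hs⟩
      have : p.length = 0 := Nat.le_zero.mp hp
      have := (SimpleGraph.Walk.eq_of_length_eq_zero this)
      subst this
      exact hs
  | succ d ih =>
    intro v
    rw [hRstep]
    ext s
    simp only [Set.mem_iUnion, Set.mem_setOf_eq]
    constructor
    · rintro ⟨w, hw, hs⟩
      rw [ih w] at hs
      simp only [Set.mem_iUnion, Set.mem_setOf_eq] at hs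
      obtain ⟨u, ⟨p, hp⟩, hs⟩ := hs
      rcases hw with rfl | hadj
      · exact ⟨u, ⟨p, hp.trans (Nat.le_succ d)⟩, hs⟩
      · exact ⟨u, ⟨SimpleGraph.Walk.cons hadj p, by
          simpa using Nat.succ_le_succ hp⟩, hs⟩
    · rintro ⟨u, ⟨p, hp⟩, hs⟩
      cases p with
      | nil =>
        refine ⟨v, Or.inl rfl, ?_⟩
        rw [ih v]
        simp only [Set.mem_iUnion, Set.mem_setOf_eq]
        exact ⟨v, ⟨SimpleGraph.Walk.nil, Nat.zero_le d⟩, hs⟩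
      | cons hadj q =>
        rename_i w
        refine ⟨w, Or.inr hadj, ?_⟩
        rw [ih w]
        simp only [Set.mem_iUnion, Set.mem_setOf_eq]
        refine ⟨u, ⟨q, ?_⟩, hs⟩
        simpa using Nat.le_of_succ_le_succ (by simpa using hp)
end

section
/- Let G be a simple graph on a vertex type V and let H be a spanning subgraph of G such that for every edge {x, y} of G there is a walk in H from x to y of length at most s. Define rumor sets by R 0 v = {v} and R (j+1) v = ⋃ { R j w : w is within s hops of v in H }. Then for every k and every node v, every node u with a walk in G from v to u of length at most k satisfies u ∈ R k v. (Reusing the established links: repeating an s-hop flooding along H a total of k times solves the k-local broadcast problem.) -/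
/-- Reusing the established links: if `H` is a spanning subgraph
of `G` such that every edge of `G` is spanned by a walk in `H` of length at
most `s`, then repeating an `s`-hop flooding along `H` a total of `k` times
solves the `k`-local broadcast problem: every node `u` within `k` hops of `v`
in `G` satisfies `u ∈ R k v`. -/
theorem repeated_flooding_solves_k_local_broadcast
    {V : Type*} (G H : SimpleGraph V) (hHG : H ≤ G) (s : ℕ)
    (hspan : ∀ x y : V, G.Adj x y → ∃ p : H.Walk x y, p.length ≤ s)
    (R : ℕ → V → Set V)
    (hR0 : ∀ v : V, R 0 v = {v})
    (hRstep : ∀ (j : ℕ) (v : V),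
        R (j + 1) v = ⋃ w ∈ {w : V | ∃ p : H.Walk v w, p.length ≤ s}, R j w) :
    ∀ (k : ℕ) (v u : V), (∃ p : G.Walk v u, p.length ≤ k) → u ∈ R k v := by
  intro k
  induction k with
  | zero =>
    intro v u ⟨p, hp⟩
    rw [hR0]
    have : p.Nil := SimpleGraph.Walk.nil_iff_length_eq.mpr (Nat.le_zero.mp hp)
    exact (this.eq).symm ▸ rfl
  | succ k ih =>
    intro v u ⟨p, hp⟩
    rw [hRstep]
    cases p with
    | nil =>
      refine Set.mem_biUnion ⟨SimpleGraph.Walk.nil, Nat.zero_le s⟩ ?_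
      exact ih v v ⟨SimpleGraph.Walk.nil, Nat.zero_le k⟩
    | cons h q =>
      refine Set.mem_biUnion (hspan _ _ h) ?_
      exact ih _ u ⟨q, by simpa using Nat.succ_le_succ_iff.mp hp⟩
end
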